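/- Let R be a ring of prime characteristic p that is F-split, i.e., the Frobenius F : R → R admits an R-linear splitting σ with σ∘F = id. Let 𝔟 ⊆ 𝔞 ⊆ R be ideals and e ≥ 0. Then D^{(e)}·𝔞 = D^{(e)}·𝔟 if and only if D^{(e+1)}·𝔞^{[p]} = D^{(e+1)}·𝔟^{[p]}. -/
import Mathlib


/-- A differential operator of level `e`: an `R^{p^e}`-linear endomorphism of `R`. -/
def IsDiffOp {R : Type*} [CommRing R] (p e : ℕ) (δ : R →+ R) : Prop :=
  ∀ c x : R, δ (c ^ p ^ e * x) = c ^ p ^ e * δ x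

/-- The ideal `D^{(e)} · J` generated by the images of elements of `J` under all
differential operators of level `e`. -/
def DIdeal {R : Type*} [CommRing R] (p e : ℕ) (J : Ideal R) : Ideal R :=
  Ideal.span {y : R | ∃ δ : R →+ R, IsDiffOp p e δ ∧ ∃ x ∈ J, δ x = y}

/-- The Frobenius power `I^{[p]}`: the ideal generated by the `p`-th powers of
the elements of `I`. -/
def FrobPow {R : Type*} [CommRing R] (p : ℕ) (I : Ideal R) : Ideal R :=
  Ideal.span ((fun x : R => x ^ p) '' (I : Set R))

/-- `R` is F-split: the Frobenius admits an `R`-linear splitting, i.e. an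
additive map `σ : R → R` with `σ (c^p * x) = c * σ x` and `σ 1 = 1`. -/
def FSplit (p : ℕ) (R : Type*) [CommRing R] : Prop :=
  ∃ σ : R →+ R, σ 1 = 1 ∧ ∀ c x : R, σ (c ^ p * x) = c * σ x

section Aux

variable {R : Type*} [CommRing R] (p e : ℕ)

lemma isDiffOp_comp {δ δ' : R →+ R} (h : IsDiffOp p e δ) (h' : IsDiffOp p e δ') :
    IsDiffOp p e (δ.comp δ') := fun c x => by
  show δ (δ' (c ^ p ^ e * x)) = c ^ p ^ e * δ (δ' x)
  rw [h', h]

lemma isDiffOp_mulLeft (r : R) : IsDiffOp p e (AddMonoidHom.mulLeft r) := fun c x => by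
  show r * (c ^ p ^ e * x) = c ^ p ^ e * (r * x); ring

lemma mem_DIdeal {δ : R →+ R} (hδ : IsDiffOp p e δ) {J : Ideal R} {x : R} (hx : x ∈ J) :
    δ x ∈ DIdeal p e J :=
  Ideal.subset_span ⟨δ, hδ, x, hx, rfl⟩

lemma le_DIdeal (J : Ideal R) : J ≤ DIdeal p e J := fun x hx => by
  simpa using mem_DIdeal p e (δ := AddMonoidHom.id R) (fun _ _ => rfl) hx

lemma DIdeal_mono {J J' : Ideal R} (h : J ≤ J') : DIdeal p e J ≤ DIdeal p e J' := by
  apply Ideal.span_mono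
  rintro y ⟨δ, hδ, x, hx, rfl⟩
  exact ⟨δ, hδ, x, h hx, rfl⟩

lemma apply_mem_DIdeal {J : Ideal R} {x : R} (hx : x ∈ DIdeal p e J)
    {δ : R →+ R} (hδ : IsDiffOp p e δ) : δ x ∈ DIdeal p e J := by
  refine Submodule.span_induction
    (p := fun x _ => ∀ δ : R →+ R, IsDiffOp p e δ → δ x ∈ DIdeal p e J)
    ?_ ?_ ?_ ?_ hx δ hδ
  · rintro y ⟨δ', hδ', a, ha, rfl⟩ δ hδ
    exact (mem_DIdeal p e (isDiffOp_comp p e hδ hδ') ha : _)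
  · intro δ _; simp
  · intro a b _ _ iha ihb δ hδ
    rw [map_add]; exact add_mem (iha δ hδ) (ihb δ hδ)
  · intro r a _ ih δ hδ
    have : δ (r • a) = (δ.comp (AddMonoidHom.mulLeft r)) a := by
      simp [smul_eq_mul]
    rw [this]
    exact ih _ (isDiffOp_comp p e hδ (isDiffOp_mulLeft p e r))

lemma DIdeal_idem (J : Ideal R) : DIdeal p e (DIdeal p e J) = DIdeal p e J := by
  refine le_antisymm ?_ (le_DIdeal p e _)
  rw [DIdeal, Ideal.span_le]
  rintro y ⟨δ, hδ, x, hx, rfl⟩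
  exact apply_mem_DIdeal p e hx hδ

lemma frobPow_mono {J J' : Ideal R} (h : J ≤ J') : FrobPow p J ≤ FrobPow p J' :=
  Ideal.span_mono (Set.image_mono h)

lemma pow_mem_frobPow {J : Ideal R} {x : R} (hx : x ∈ J) : x ^ p ∈ FrobPow p J :=
  Ideal.subset_span ⟨x, hx, rfl⟩

variable (hp : p.Prime) [CharP R p]

/-- Key lemma: `(D^{(e)} J)^{[p]} ⊆ D^{(e+1)} (J^{[p]})`, given an F-splitting. -/
lemma frobPow_DIdeal_le (hp : p.Prime) {σ : R →+ R} (hσ1 : σ 1 = 1) (hσ : ∀ c x : R, σ (c ^ p * x) = c * σ x)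
    (J : Ideal R) : FrobPow p (DIdeal p e J) ≤ DIdeal p (e + 1) (FrobPow p J) := by
  haveI := Fact.mk hp
  rw [FrobPow, Ideal.span_le]
  rintro _ ⟨x, hx, rfl⟩
  refine Submodule.span_induction
    (p := fun x _ => x ^ p ∈ DIdeal p (e + 1) (FrobPow p J)) ?_ ?_ ?_ ?_ hx
  · rintro y ⟨δ, hδ, a, ha, rfl⟩
    set F : R →+ R := AddMonoidHom.mk' (fun z => z ^ p) (fun a b => add_pow_char a b p) with hF
    set δ'' : R →+ R := F.comp (δ.comp σ) with hδ''
    have hop : IsDiffOp p (e + 1) δ'' := by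
      intro c x
      have h1 : c ^ p ^ (e + 1) = (c ^ p ^ e) ^ p := by rw [← pow_mul, pow_succ]
      simp only [hδ'', hF, AddMonoidHom.comp_apply, AddMonoidHom.mk'_apply, h1]
      rw [hσ (c ^ p ^ e) x, hδ c (σ x), mul_pow]
    have hval : δ'' (a ^ p) = (δ a) ^ p := by
      simp only [hδ'', hF, AddMonoidHom.comp_apply, AddMonoidHom.mk'_apply]
      have : σ (a ^ p) = a := by
        have := hσ a 1; rwa [mul_one, hσ1, mul_one] at this
      rw [this]
    rw [← hval]
    exact mem_DIdeal p (e + 1) hop (pow_mem_frobPow p ha)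
  · simp [zero_pow hp.ne_zero]
  · intro a b _ _ iha ihb
    rw [add_pow_char a b p]
    exact add_mem iha ihb
  · intro r a _ ih
    rw [smul_eq_mul, mul_pow]
    exact Ideal.mul_mem_left _ _ ih

/-- Key lemma: the splitting `σ` maps `D^{(e+1)} (J^{[p]})` into `D^{(e)} J`. -/
lemma sigma_mul_mem (hp : p.Prime) {σ : R →+ R} (hσ1 : σ 1 = 1) (hσ : ∀ c x : R, σ (c ^ p * x) = c * σ x)
    (J : Ideal R) {y : R} (hy : y ∈ DIdeal p (e + 1) (FrobPow p J)) (r : R) :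
    σ (r * y) ∈ DIdeal p e J := by
  haveI := Fact.mk hp
  have inner : ∀ x ∈ FrobPow p J, ∀ δ : R →+ R, IsDiffOp p (e + 1) δ → ∀ r : R,
      σ (r * δ x) ∈ DIdeal p e J := by
    intro x hx
    refine Submodule.span_induction
      (p := fun x _ => ∀ δ : R →+ R, IsDiffOp p (e + 1) δ → ∀ r : R,
        σ (r * δ x) ∈ DIdeal p e J) ?_ ?_ ?_ ?_ hx
    · rintro _ ⟨b, hb, rfl⟩ δ hδ r
      set ν : R →+ R := AddMonoidHom.mk' (fun z => σ (r * δ (z ^ p)))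
        (fun a b => by
          show σ (r * δ ((a + b) ^ p)) = σ (r * δ (a ^ p)) + σ (r * δ (b ^ p))
          rw [add_pow_char a b p, map_add, mul_add, map_add]) with hν
      have hop : IsDiffOp p e ν := by
        intro c z
        show σ (r * δ ((c ^ p ^ e * z) ^ p)) = c ^ p ^ e * σ (r * δ (z ^ p))
        have h1 : (c ^ p ^ e * z) ^ p = c ^ p ^ (e + 1) * z ^ p := by
          rw [mul_pow, ← pow_mul, ← pow_succ]
        rw [h1, hδ c (z ^ p)]
        have h2 : r * (c ^ p ^ (e + 1) * δ (z ^ p)) = (c ^ p ^ e) ^ p * (r * δ (z ^ p)) := by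
          rw [← pow_mul, ← pow_succ]; ring
        rw [h2, hσ]
      have : σ (r * δ (b ^ p)) = ν b := rfl
      rw [this]
      exact mem_DIdeal p e hop hb
    · intro δ _ r; simp
    · intro a b _ _ iha ihb δ hδ r
      rw [map_add, mul_add, map_add]
      exact add_mem (iha δ hδ r) (ihb δ hδ r)
    · intro s a _ ih δ hδ r
      have : δ (s • a) = (δ.comp (AddMonoidHom.mulLeft s)) a := by simp [smul_eq_mul]
      rw [this]
      exact ih _ (isDiffOp_comp p (e + 1) hδ (isDiffOp_mulLeft p (e + 1) s)) r
  refine Submodule.span_induction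
    (p := fun y _ => ∀ r : R, σ (r * y) ∈ DIdeal p e J) ?_ ?_ ?_ ?_ hy r
  · rintro _ ⟨δ, hδ, x, hx, rfl⟩ r
    exact inner x hx δ hδ r
  · intro r; simp
  · intro a b _ _ iha ihb r
    rw [mul_add, map_add]
    exact add_mem (iha r) (ihb r)
  · intro s a _ ih r
    rw [smul_eq_mul, ← mul_assoc]
    exact ih (r * s)

end Aux

theorem stmt11 {R : Type*} [CommRing R] (p : ℕ) (hp : p.Prime) [CharP R p]
    (hFS : FSplit p R) (𝔞 𝔟 : Ideal R) (h𝔟𝔞 : 𝔟 ≤ 𝔞) (e : ℕ) :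
    DIdeal p e 𝔞 = DIdeal p e 𝔟 ↔
      DIdeal p (e + 1) (FrobPow p 𝔞) = DIdeal p (e + 1) (FrobPow p 𝔟) := by
  obtain ⟨σ, hσ1, hσ⟩ := hFS
  constructor
  · intro h
    refine le_antisymm ?_ (DIdeal_mono p (e + 1) (frobPow_mono p h𝔟𝔞))
    calc DIdeal p (e + 1) (FrobPow p 𝔞)
        ≤ DIdeal p (e + 1) (FrobPow p (DIdeal p e 𝔞)) :=
          DIdeal_mono p (e + 1) (frobPow_mono p (le_DIdeal p e 𝔞))
      _ = DIdeal p (e + 1) (FrobPow p (DIdeal p e 𝔟)) := by rw [h]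
      _ ≤ DIdeal p (e + 1) (DIdeal p (e + 1) (FrobPow p 𝔟)) :=
          DIdeal_mono p (e + 1) (frobPow_DIdeal_le p e hp hσ1 hσ 𝔟)
      _ = DIdeal p (e + 1) (FrobPow p 𝔟) := DIdeal_idem p (e + 1) _
  · intro h
    refine le_antisymm ?_ (DIdeal_mono p e h𝔟𝔞)
    intro x hx
    have h1 : x ^ p ∈ DIdeal p (e + 1) (FrobPow p 𝔟) := by
      rw [← h]
      exact frobPow_DIdeal_le p e hp hσ1 hσ 𝔞 (pow_mem_frobPow p hx)
    have h2 := sigma_mul_mem p e hp hσ1 hσ 𝔟 h1 1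
    have h3 : σ (1 * x ^ p) = x := by
      rw [one_mul]
      have := hσ x 1; rwa [mul_one, hσ1, mul_one] at this
    rwa [h3] at h2
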